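/- arXiv:1509.03092 — 2 statements merged into one kernel-verified Lean document; each statement's English description precedes it below -/
import Mathlib

section
/- Let G be a cubic (3-regular) bipartite simple graph of order n with bipartition (A, B), and suppose 8 divides n. Then the domination number of G satisfies γ(G) = n/4 if and only if there exists a subset S ⊆ A of size 3n/8 such that G is both (S_{1,2}, S)-decomposable and (S_{1,2}, N(A∖S))-decomposable. -/
open SimpleGraph

variable {V : Type*}

/-- A (potential) copy of the double-star `S_{1,r-1}` in a graph on vertex set `V`.
`center` is the vertex of degree `r`, `mid` is the vertex of degree 2 (adjacent to `center`),
`pend` is the pendant neighbour of `mid`, and `leaf i` are the `r - 1` pendant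
neighbours of `center`.  For `r = 3` this is the double-star `S_{1,2}`. -/
structure DoubleStarCopy (V : Type*) (r : ℕ) where
  center : V
  mid : V
  pend : V
  leaf : Fin (r - 1) → V

namespace DoubleStarCopy

variable {r : ℕ}

/-- The list of vertices of the copy. -/
def vertList (t : DoubleStarCopy V r) : List V :=
  t.center :: t.mid :: t.pend :: List.ofFn t.leaf

/-- The vertex set of the copy. -/
def verts (t : DoubleStarCopy V r) : Set V := {v | v ∈ t.vertList}

/-- The pendant (degree-one) vertices of the copy. -/
def pendants (t : DoubleStarCopy V r) : Set V := insert t.pend (Set.range t.leaf)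

/-- The edge set of the copy. -/
def edges (t : DoubleStarCopy V r) : Set (Sym2 V) :=
  insert s(t.center, t.mid) (insert s(t.mid, t.pend)
    (Set.range fun i => s(t.center, t.leaf i)))

/-- `t` is a genuine copy of the double-star `S_{1,r-1}` inside `G`:
its vertices are pairwise distinct and all its edges are edges of `G`. -/
def IsCopyIn (G : SimpleGraph V) (t : DoubleStarCopy V r) : Prop :=
  t.vertList.Nodup ∧ t.edges ⊆ G.edgeSet

end DoubleStarCopy

/-- `𝒟` is an `S_{1,r-1}`-decomposition of `G`: every member of `𝒟` is a copy of the
double-star `S_{1,r-1}` in `G`, and every edge of `G` lies in exactly one member of `𝒟`. -/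
def IsDSDecompOf (G : SimpleGraph V) (r : ℕ) (𝒟 : Set (DoubleStarCopy V r)) : Prop :=
  (∀ t ∈ 𝒟, t.IsCopyIn G) ∧ ∀ e ∈ G.edgeSet, ∃! t, t ∈ 𝒟 ∧ e ∈ t.edges

/-- `G` has an `S_{1,r-1}`-decomposition. -/
def HasDSDecomp (G : SimpleGraph V) (r : ℕ) : Prop :=
  ∃ 𝒟 : Set (DoubleStarCopy V r), IsDSDecompOf G r 𝒟

/-- `G` is `(S_{1,r-1}, S)`-decomposable: it has an `S_{1,r-1}`-decomposition in which `S`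
is exactly the set of vertices occurring as the degree-`r` vertex of some copy. -/
def IsDSSDecomposable (G : SimpleGraph V) (r : ℕ) (S : Set V) : Prop :=
  ∃ 𝒟 : Set (DoubleStarCopy V r), IsDSDecompOf G r 𝒟 ∧ S = {v | ∃ t ∈ 𝒟, t.center = v}

/-- `S` is an independent set of `G`. -/
def IsIndepSetIn (G : SimpleGraph V) (S : Set V) : Prop :=
  ∀ ⦃u⦄, u ∈ S → ∀ ⦃v⦄, v ∈ S → ¬ G.Adj u v

/-- The independence number `α(G)`. -/
noncomputable def indepNumber (G : SimpleGraph V) : ℕ :=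
  sSup {k | ∃ S : Set V, IsIndepSetIn G S ∧ S.ncard = k}

/-- `D` is a dominating set of `G`. -/
def IsDomSet (G : SimpleGraph V) (D : Set V) : Prop :=
  ∀ v ∉ D, ∃ d ∈ D, G.Adj v d

/-- The domination number `γ(G)`. -/
noncomputable def domNumber (G : SimpleGraph V) : ℕ :=
  sInf {k | ∃ D : Set V, IsDomSet G D ∧ D.ncard = k}

/-- `N(X)`, the union of the neighbourhoods of the vertices of `X`. -/
def nbhd (G : SimpleGraph V) (X : Set V) : Set V := {v | ∃ x ∈ X, G.Adj x v}

/-- The degree of `v` in the graph `G ∖ S` (for `v ∉ S`). -/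
noncomputable def degIn (G : SimpleGraph V) (S : Set V) (v : V) : ℕ :=
  {w | w ∉ S ∧ G.Adj v w}.ncard

/-- The vertex `v` lies on a cycle of length `k` in `G`. -/
def InCycleOfLength (G : SimpleGraph V) (v : V) (k : ℕ) : Prop :=
  ∃ c : G.Walk v v, c.IsCycle ∧ c.length = k

/-- A graph is a cycle: it has a (genuine, simple) cycle passing through all of
its vertices and using all of its edges. -/
def IsCycleGraph {W : Type*} (H : SimpleGraph W) : Prop :=
  ∃ (v : W) (c : H.Walk v v), c.IsCycle ∧ (∀ x, x ∈ c.support) ∧ ∀ e ∈ H.edgeSet, e ∈ c.edges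

/-- A graph is a path: it has a simple path passing through all of its vertices and
using all of its edges. -/
def IsPathGraph {W : Type*} (H : SimpleGraph W) : Prop :=
  ∃ (u v : W) (p : H.Walk u v), p.IsPath ∧ (∀ x, x ∈ p.support) ∧ ∀ e ∈ H.edgeSet, e ∈ p.edges

/-- `S` is a cycling set of `G`: every connected component of `G ∖ S` is a cycle. -/
def IsCyclingSet (G : SimpleGraph V) (S : Set V) : Prop :=
  ∀ c : (G.induce Sᶜ).ConnectedComponent, IsCycleGraph ((G.induce Sᶜ).induce c.supp)

/-- `(A, B)` is a bipartition of `G`. -/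
def IsBipartitionOf (G : SimpleGraph V) (A B : Set V) : Prop :=
  A ∪ B = Set.univ ∧ Disjoint A B ∧ ∀ ⦃u v⦄, G.Adj u v → (u ∈ A ↔ v ∈ B)

/-- The edge set of the graph `G ∖ S`: edges of `G` avoiding `S`. -/
def removedEdges (G : SimpleGraph V) (S : Set V) : Set (Sym2 V) :=
  {e | e ∈ G.edgeSet ∧ ∀ v ∈ e, v ∉ S}

/-- Adjacency in the auxiliary bipartite graph `H = (S, L)`:
`s ∈ S` is adjacent to the vertex `u_e` corresponding to an edge `e` of `G ∖ S`
iff `G` has an edge with one end `s` whose other end lies on `e`. -/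
def auxAdj (G : SimpleGraph V) (s : V) (e : Sym2 V) : Prop :=
  ∃ w ∈ e, G.Adj s w

/-- The auxiliary bipartite graph `H = (S, L)` has a perfect matching: a bijection
between `S` and the edges of `G ∖ S` matching each `s ∈ S` with an `H`-neighbour. -/
def AuxHasPerfectMatching (G : SimpleGraph V) (S : Set V) : Prop :=
  ∃ m : ↥S ≃ ↥(removedEdges G S), ∀ s : ↥S, auxAdj G (s : V) ((m s : Sym2 V))

/-!
A vertex of a cubic graph dominates at most four vertices, so `4 γ(G) ≥ n`, with equality exactly
when a minimum dominating set `D` is a perfect code: the closed neighbourhoods of its vertices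
partition `V`.

Given a perfect code `D`, deleting it leaves a `2`-regular bipartite graph between `A ∖ D` and
`B ∖ D`, which has a perfect matching `c ↦ m c`. Every edge avoiding `A ∖ D` joins some `m c` to
its unique neighbour `p c` in `D`, so the three edges at `c` together with `m c p c` form copies
of `S_{1,2}` centred at the vertices of `A ∖ D` that decompose `G`. The same applies to
`B ∖ D = N(A ∩ D)`, and counting gives `|A ∖ D| = 3n/8`.

Conversely, let `T = N(A ∖ S)` be the centre set of a decomposition. An edge from `a ∈ A` to
`B ∖ T` avoids every centre, so it joins the middle vertex `a` of its copy to the pendant vertex;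
since distinct copies of a decomposition of a cubic graph have distinct middle vertices, `a` has at
most one neighbour in `B ∖ T`. Hence `|N(B ∖ T)| = 3 |B ∖ T| ≥ 3 (n/2 - 3n/8) = |S|`, and as
`N(B ∖ T) ⊆ S` this forces `N(B ∖ T) = S`. Then `(A ∖ S) ∪ (B ∖ T)` is a dominating set of
size `n/4`.
-/

namespace DoubleStarCopy

variable {r : ℕ} {G : SimpleGraph V} {t : DoubleStarCopy V r}

lemma mk_center_mid_mem_edges : s(t.center, t.mid) ∈ t.edges := Set.mem_insert _ _

lemma mk_mid_pend_mem_edges : s(t.mid, t.pend) ∈ t.edges :=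
  Set.mem_insert_of_mem _ (Set.mem_insert _ _)

lemma eq_mk_mid_pend_of_center_notMem {e : Sym2 V} (he : e ∈ t.edges) (hc : t.center ∉ e) :
    e = s(t.mid, t.pend) := by
  rcases he with rfl | rfl | ⟨i, rfl⟩ <;> simp_all

lemma IsCopyIn.center_ne_pend (h : t.IsCopyIn G) : t.center ≠ t.pend := by
  have := h.1
  simp_all [vertList]

lemma IsCopyIn.adj_center_mid (h : t.IsCopyIn G) : G.Adj t.center t.mid :=
  h.2 mk_center_mid_mem_edges

lemma IsCopyIn.adj_mid_pend (h : t.IsCopyIn G) : G.Adj t.mid t.pend :=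
  h.2 mk_mid_pend_mem_edges

lemma exists_isCopyIn_of_adj [Fintype V] [DecidableRel G.Adj] (h3 : G.IsRegularOfDegree 3)
    {c w p : V} (hcw : G.Adj c w) (hwp : G.Adj w p) (hcp : ¬ G.Adj c p) (hpc : p ≠ c) :
    ∃ t : DoubleStarCopy V 3, t.center = c ∧ t.mid = w ∧ t.pend = p ∧ t.IsCopyIn G ∧
      t.edges = insert s(w, p) (G.incidenceSet c) := by
  classical
  obtain ⟨x, y, hxy, hN⟩ : ∃ x y, x ≠ y ∧ (G.neighborFinset c).erase w = {x, y} :=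
    Finset.card_eq_two.1 <| by
      rw [Finset.card_erase_of_mem (G.mem_neighborFinset _ _ |>.2 hcw),
        card_neighborFinset_eq_degree, h3.degree_eq]
  have hleaf : ∀ v, G.Adj c v ↔ v = w ∨ v = x ∨ v = y := fun v => by
    by_cases hv : v = w
    · simp [hv, hcw]
    · simpa [hv] using congrArg (v ∈ ·) hN
  have hx := (hleaf x).2 (by simp)
  have hy := (hleaf y).2 (by simp)
  have hxw : x ≠ w := fun h => by simpa [h] using congrArg (w ∈ ·) hN
  have hyw : y ≠ w := fun h => by simpa [h] using congrArg (w ∈ ·) hN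
  refine ⟨⟨c, w, p, ![x, y]⟩, rfl, rfl, rfl, ⟨?_, ?_⟩, ?_⟩
  · simp only [vertList, List.ofFn_succ, Fin.succ_zero_eq_one, List.ofFn_zero]
    simp only [List.nodup_cons, List.mem_cons, List.not_mem_nil, or_false, not_or]
    have hpx : p ≠ x := by rintro rfl; exact hcp hx
    have hpy : p ≠ y := by rintro rfl; exact hcp hy
    exact ⟨⟨G.ne_of_adj hcw, hpc.symm, G.ne_of_adj hx, G.ne_of_adj hy⟩,
      ⟨G.ne_of_adj hwp, hxw.symm, hyw.symm⟩, ⟨hpx, hpy⟩, hxy, not_false, List.nodup_nil⟩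
  · rintro e (rfl | rfl | ⟨i, rfl⟩)
    · exact hcw
    · exact hwp
    · fin_cases i
      exacts [hx, hy]
  · ext e
    refine ⟨?_, ?_⟩
    · rintro (rfl | rfl | ⟨i, rfl⟩)
      · exact Or.inr ⟨hcw, Sym2.mem_mk_left _ _⟩
      · exact Or.inl rfl
      · fin_cases i
        exacts [Or.inr ⟨hx, Sym2.mem_mk_left _ _⟩, Or.inr ⟨hy, Sym2.mem_mk_left _ _⟩]
    · rintro (rfl | ⟨he, hce⟩)
      · exact Or.inr (Or.inl rfl)
      · obtain ⟨v, rfl⟩ := Sym2.mem_iff_exists.1 hce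
        rcases (hleaf v).1 he with rfl | rfl | rfl
        · exact Or.inl rfl
        · exact Or.inr (Or.inr ⟨0, rfl⟩)
        · exact Or.inr (Or.inr ⟨1, rfl⟩)

end DoubleStarCopy

namespace IsDSDecompOf

variable {r : ℕ} {G : SimpleGraph V} {𝒟 : Set (DoubleStarCopy V r)}

lemma eq_of_mem_edges (h : IsDSDecompOf G r 𝒟) {t₁ t₂ : DoubleStarCopy V r} (ht₁ : t₁ ∈ 𝒟)
    (ht₂ : t₂ ∈ 𝒟) {e : Sym2 V} (he₁ : e ∈ t₁.edges) (he₂ : e ∈ t₂.edges) : t₁ = t₂ :=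
  (h.2 e ((h.1 t₁ ht₁).2 he₁)).unique ⟨ht₁, he₁⟩ ⟨ht₂, he₂⟩

/-- Two copies with the same middle vertex `x` would use four distinct edges at `x`. -/
lemma mid_injOn [Fintype V] [DecidableRel G.Adj] (h : IsDSDecompOf G r 𝒟)
    (hdeg : ∀ v, G.degree v ≤ 3) : Set.InjOn DoubleStarCopy.mid 𝒟 := by
  classical
  intro t₁ ht₁ t₂ ht₂ hmid
  by_contra hne
  have hedge : ∀ t : DoubleStarCopy V r, ∀ w ∈ ({t.center, t.pend} : Finset V),
      s(t.mid, w) ∈ t.edges := by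
    intro t w hw
    rcases Finset.mem_insert.1 hw with rfl | hw
    · exact Sym2.eq_swap ▸ DoubleStarCopy.mk_center_mid_mem_edges
    · rw [Finset.mem_singleton.1 hw]
      exact DoubleStarCopy.mk_mid_pend_mem_edges
  have hdisj : Disjoint ({t₁.center, t₁.pend} : Finset V) {t₂.center, t₂.pend} :=
    Finset.disjoint_left.2 fun w hw₁ hw₂ =>
      hne (h.eq_of_mem_edges ht₁ ht₂ (hedge t₁ w hw₁) (hmid ▸ hedge t₂ w hw₂))
  have hnbr : ∀ t ∈ 𝒟, ({t.center, t.pend} : Finset V) ⊆ G.neighborFinset t.mid := by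
    intro t ht w hw
    rw [G.mem_neighborFinset]
    rcases Finset.mem_insert.1 hw with rfl | hw
    · exact (h.1 t ht).adj_center_mid.symm
    · exact Finset.mem_singleton.1 hw ▸ (h.1 t ht).adj_mid_pend
  have hcard := Finset.card_le_card (Finset.union_subset (hnbr t₁ ht₁) (hmid ▸ hnbr t₂ ht₂))
  rw [Finset.card_union_of_disjoint hdisj, Finset.card_pair (h.1 t₁ ht₁).center_ne_pend,
    Finset.card_pair (h.1 t₂ ht₂).center_ne_pend, card_neighborFinset_eq_degree] at hcard
  linarith [hdeg t₁.mid]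

end IsDSDecompOf

lemma isDSSDecomposable_of_injOn_of_surjOn [Fintype V] {G : SimpleGraph V} [DecidableRel G.Adj]
    (h3 : G.IsRegularOfDegree 3) {C : Set V} (hC : IsIndepSetIn G C) {m p : V → V}
    (hm : ∀ c ∈ C, G.Adj c (m c)) (hp : ∀ c ∈ C, G.Adj (m c) (p c))
    (hcp : ∀ c ∈ C, ¬ G.Adj c (p c)) (hpC : ∀ c ∈ C, p c ∉ C)
    (hinj : Set.InjOn (fun c => s(m c, p c)) C)
    (hsurj : Set.SurjOn (fun c => s(m c, p c)) C (removedEdges G C)) :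
    IsDSSDecomposable G 3 C := by
  have hstar : ∀ c, ∃ t : DoubleStarCopy V 3, c ∈ C → t.center = c ∧ t.IsCopyIn G ∧
      t.edges = insert s(m c, p c) (G.incidenceSet c) := fun c => by
    by_cases hc : c ∈ C
    · obtain ⟨t, htc, -, -, ht⟩ := DoubleStarCopy.exists_isCopyIn_of_adj h3 (hm c hc) (hp c hc)
        (hcp c hc) (fun h => hpC c hc (by rwa [h]))
      exact ⟨t, fun _ => ⟨htc, ht⟩⟩
    · exact ⟨⟨c, c, c, fun _ => c⟩, fun h => (hc h).elim⟩
  choose star hstar using hstar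
  have hout : ∀ c ∈ C, ∀ v ∈ s(m c, p c), v ∉ C := by
    intro c hc v hv hvC
    rcases Sym2.mem_iff.1 hv with rfl | rfl
    · exact hC hc hvC (hm c hc)
    · exact hpC c hc hvC
  have hunique : ∀ c₁ ∈ C, ∀ c₂ ∈ C, ∀ e ∈ (star c₁).edges, e ∈ (star c₂).edges → c₁ = c₂ := by
    intro c₁ hc₁ c₂ hc₂ e he₁ he₂
    rw [(hstar c₁ hc₁).2.2] at he₁
    rw [(hstar c₂ hc₂).2.2] at he₂
    rcases he₁ with rfl | ⟨-, hc₁e⟩ <;> rcases he₂ with he₂ | ⟨he, hc₂e⟩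
    · exact hinj hc₁ hc₂ he₂
    · exact absurd hc₂ (hout c₁ hc₁ c₂ hc₂e)
    · exact absurd hc₁ (hout c₂ hc₂ c₁ (he₂ ▸ hc₁e))
    · by_contra hne
      rw [Sym2.mem_and_mem_iff hne |>.1 ⟨hc₁e, hc₂e⟩, mem_edgeSet] at he
      exact hC hc₁ hc₂ he
  refine ⟨star '' C, ⟨?_, fun e he => ?_⟩, ?_⟩
  · rintro _ ⟨c, hc, rfl⟩
    exact (hstar c hc).2.1
  · obtain ⟨c, hc, hec⟩ : ∃ c ∈ C, e ∈ (star c).edges := by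
      by_cases hce : ∃ c ∈ C, c ∈ e
      · obtain ⟨c, hc, hce⟩ := hce
        exact ⟨c, hc, (hstar c hc).2.2 ▸ Or.inr ⟨he, hce⟩⟩
      · obtain ⟨c, hc, rfl⟩ := hsurj ⟨he, fun v hv hvC => hce ⟨v, hvC, hv⟩⟩
        exact ⟨c, hc, (hstar c hc).2.2 ▸ Or.inl rfl⟩
    refine ⟨star c, ⟨⟨c, hc, rfl⟩, hec⟩, ?_⟩
    rintro _ ⟨⟨c', hc', rfl⟩, hec'⟩
    rw [hunique c' hc' c hc e hec' hec]
  · ext v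
    refine ⟨fun hv => ⟨star v, ⟨v, hv, rfl⟩, (hstar v hv).1⟩, ?_⟩
    rintro ⟨_, ⟨c, hc, rfl⟩, rfl⟩
    rwa [(hstar c hc).1]

lemma SimpleGraph.IsBipartiteWith.not_adj_of_mem_left {G : SimpleGraph V} {A B : Set V}
    (h : G.IsBipartiteWith A B) {v w : V} (hv : v ∈ A) (hw : w ∈ A) : ¬ G.Adj v w :=
  fun hvw => Set.disjoint_left.1 h.disjoint hw (h.mem_of_mem_adj hv hvw)

lemma SimpleGraph.IsBipartiteWith.ncard_eq_of_isRegularOfDegree [Fintype V]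
    {G : SimpleGraph V} [DecidableRel G.Adj] {A B : Set V} {k : ℕ} (h : G.IsBipartiteWith A B)
    (hreg : G.IsRegularOfDegree k) (hk : k ≠ 0) : A.ncard = B.ncard := by
  classical
  have hsum := isBipartiteWith_sum_degrees_eq (s := A.toFinset) (t := B.toFinset) (by simpa)
  simp only [hreg.degree_eq, Finset.sum_const, smul_eq_mul] at hsum
  rw [Set.ncard_eq_toFinset_card', Set.ncard_eq_toFinset_card']
  exact Nat.eq_of_mul_eq_mul_right (Nat.pos_of_ne_zero hk) hsum

namespace IsBipartitionOf

variable {G : SimpleGraph V} {A B : Set V}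

lemma isBipartiteWith (h : IsBipartitionOf G A B) : G.IsBipartiteWith A B where
  disjoint := h.2.1
  mem_of_adj u v huv := by
    by_cases hu : u ∈ A
    · exact Or.inl ⟨hu, (h.2.2 huv).1 hu⟩
    · have hv : v ∉ B := fun hv => hu ((h.2.2 huv).2 hv)
      exact Or.inr ⟨(h.1.symm ▸ Set.mem_univ u).resolve_left hu,
        (h.1.symm ▸ Set.mem_univ v).resolve_right hv⟩

lemma two_mul_ncard_left [Fintype V] [DecidableRel G.Adj] {k : ℕ} (h : IsBipartitionOf G A B)
    (hreg : G.IsRegularOfDegree k) (hk : k ≠ 0) : 2 * A.ncard = Fintype.card V := by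
  rw [two_mul, ← Nat.card_eq_fintype_card, ← Set.ncard_univ, ← h.1,
    Set.ncard_union_eq h.2.1, h.isBipartiteWith.ncard_eq_of_isRegularOfDegree hreg hk]

end IsBipartitionOf

section Neighbourhood

variable [Fintype V] {G : SimpleGraph V} [DecidableRel G.Adj] {k : ℕ}

lemma ncard_nbhd_le (hdeg : ∀ v, G.degree v ≤ k) (X : Set V) :
    (nbhd G X).ncard ≤ k * X.ncard := by
  classical
  rw [Set.ncard_eq_toFinset_card', Set.ncard_eq_toFinset_card', mul_comm]
  refine (mul_one (Finset.card _)).symm.le.trans <|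
    Finset.card_mul_le_card_mul (fun v x => G.Adj x v) (fun v hv => ?_) (fun x _ => ?_)
  · obtain ⟨x, hx, hxv⟩ := Set.mem_toFinset.1 hv
    exact Finset.card_pos.2 ⟨x, by simpa using ⟨hx, hxv⟩⟩
  · refine le_trans ?_ (hdeg x)
    exact Finset.card_le_card fun v hv => by simpa using (Finset.mem_bipartiteBelow _).1 hv |>.2

lemma mul_ncard_le_ncard_nbhd (hdeg : ∀ v, k ≤ G.degree v) {X : Set V}
    (hX : ∀ ⦃v x y⦄, x ∈ X → y ∈ X → G.Adj v x → G.Adj v y → x = y) :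
    k * X.ncard ≤ (nbhd G X).ncard := by
  classical
  rw [Set.ncard_eq_toFinset_card', Set.ncard_eq_toFinset_card', mul_comm]
  refine (Finset.card_mul_le_card_mul (fun x v => G.Adj x v) (fun x hx => ?_)
    (fun v _ => ?_)).trans (mul_one (Finset.card _)).le
  · refine (hdeg x).trans ?_
    exact Finset.card_le_card fun v hv =>
      (Finset.mem_bipartiteAbove _).2 ⟨by simpa using ⟨x, by simpa using hx, by simpa using hv⟩,
        by simpa using hv⟩
  · exact Finset.card_le_one.2 fun x hx y hy => by
      simp only [Finset.mem_bipartiteBelow, Set.mem_toFinset] at hx hy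
      exact hX hx.1 hy.1 hx.2.symm hy.2.symm

end Neighbourhood

open Finset in
/-- A `k`-regular bipartite relation has a perfect matching: Hall's condition follows by double
counting. -/
theorem Finset.exists_bijOn_of_card_bipartiteAbove_eq {α β : Type*} [Nonempty β]
    (r : α → β → Prop) [∀ a b, Decidable (r a b)] {s : Finset α} {t : Finset β} {k : ℕ}
    (hk : k ≠ 0) (hs : ∀ a ∈ s, #(t.bipartiteAbove r a) = k)
    (ht : ∀ b ∈ t, #(s.bipartiteBelow r b) = k) :
    ∃ f : α → β, Set.BijOn f s t ∧ ∀ a ∈ s, r a (f a) := by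
  classical
  have hall : ∀ W : Finset s, #W ≤ #(W.biUnion fun a => t.bipartiteAbove r a) := by
    intro W
    refine Nat.le_of_mul_le_mul_right (card_mul_le_card_mul (fun (a : s) (b : β) => r a b)
      (fun a ha => ?_) (fun b hb => ?_)) (Nat.pos_of_ne_zero hk)
    · rw [← hs a a.2]
      exact card_le_card fun b hb => mem_bipartiteAbove _ |>.2
        ⟨mem_biUnion.2 ⟨a, ha, hb⟩, (mem_bipartiteAbove _).1 hb |>.2⟩
    · obtain ⟨a, -, hb⟩ := mem_biUnion.1 hb
      rw [← ht b ((mem_bipartiteAbove _).1 hb).1]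
      exact card_le_card_of_injOn Subtype.val
        (fun a ha => (mem_bipartiteBelow _).2 ⟨a.2, ((mem_bipartiteBelow _).1 ha).2⟩)
        Subtype.val_injective.injOn
  obtain ⟨g, hg, hgt⟩ := (all_card_le_biUnion_card_iff_exists_injective _).1 hall
  have hst : #s = #t :=
    Nat.eq_of_mul_eq_mul_right (Nat.pos_of_ne_zero hk) (card_mul_eq_card_mul r hs ht)
  let f : α → β := fun a => if ha : a ∈ s then g ⟨a, ha⟩ else Classical.arbitrary β
  have hf : ∀ a (ha : a ∈ s), f a = g ⟨a, ha⟩ := fun a ha => dif_pos ha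
  have hmaps : Set.MapsTo f s t := fun a ha => by
    rw [hf a ha]
    exact ((mem_bipartiteAbove _).1 (hgt _)).1
  have hinj : Set.InjOn f s := fun a ha a' ha' h => by
    rw [hf a ha, hf a' ha'] at h
    exact congrArg Subtype.val (hg h)
  refine ⟨f, ⟨hmaps, hinj, surjOn_of_injOn_of_card_le f hmaps hinj hst.ge⟩,
    fun a ha => ?_⟩
  rw [hf a ha]
  exact ((mem_bipartiteAbove _).1 (hgt ⟨a, ha⟩)).2

section Domination

variable {G : SimpleGraph V}

lemma exists_isDomSet_ncard_eq_domNumber (G : SimpleGraph V) :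
    ∃ D : Set V, IsDomSet G D ∧ D.ncard = domNumber G :=
  Nat.sInf_mem (s := {k | ∃ D : Set V, IsDomSet G D ∧ D.ncard = k})
    ⟨_, Set.univ, fun v hv => (hv (Set.mem_univ v)).elim, rfl⟩

lemma domNumber_le {D : Set V} (hD : IsDomSet G D) : domNumber G ≤ D.ncard :=
  Nat.sInf_le ⟨D, hD, rfl⟩

open Finset in
lemma IsDomSet.one_le_card_filter [DecidableEq V] [DecidableRel G.Adj] {D : Finset V}
    (hD : IsDomSet G D) (v : V) :
    1 ≤ #{d ∈ D | v = d ∨ G.Adj v d} := by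
  refine card_pos.2 ?_
  by_cases hv : v ∈ D
  · exact ⟨v, by simpa using hv⟩
  · obtain ⟨d, hd, hvd⟩ := hD v hv
    exact ⟨d, by simpa using ⟨hd, Or.inr hvd⟩⟩

variable [Fintype V] [DecidableRel G.Adj] {k : ℕ}

open Finset in
lemma sum_card_filter_eq_or_adj [DecidableEq V] (hreg : G.IsRegularOfDegree k)
    (D : Finset V) : ∑ v, #{d ∈ D | v = d ∨ G.Adj v d} = (k + 1) * #D := by
  have hclosed : ∀ d, #{v | v = d ∨ G.Adj v d} = k + 1 := fun d => by
    rw [← hreg.degree_eq d, ← card_neighborFinset_eq_degree,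
      ← card_insert_of_notMem (G.notMem_neighborFinset_self d)]
    congr 1
    ext v
    simp [adj_comm]
  rw [mul_comm, ← smul_eq_mul, ← sum_const, ← sum_congr rfl fun d _ => hclosed d]
  exact sum_card_bipartiteAbove_eq_sum_card_bipartiteBelow _

lemma IsDomSet.card_le (hreg : G.IsRegularOfDegree k) {D : Set V} (hD : IsDomSet G D) :
    Fintype.card V ≤ (k + 1) * D.ncard := by
  classical
  rw [Set.ncard_eq_toFinset_card', ← sum_card_filter_eq_or_adj hreg, ← Finset.card_univ,
    Finset.card_eq_sum_ones]
  exact Finset.sum_le_sum fun v _ => IsDomSet.one_le_card_filter (by simpa using hD) v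

lemma card_le_succ_mul_domNumber (hreg : G.IsRegularOfDegree k) :
    Fintype.card V ≤ (k + 1) * domNumber G := by
  obtain ⟨D, hD, hDγ⟩ := exists_isDomSet_ncard_eq_domNumber G
  exact hDγ ▸ hD.card_le hreg

end Domination

/-- A perfect code, also called an efficient dominating set. -/
def IsPerfectCode (G : SimpleGraph V) (D : Set V) : Prop :=
  ∀ v, ∃! d, d ∈ D ∧ (v = d ∨ G.Adj v d)

lemma IsDomSet.isPerfectCode [Fintype V] {G : SimpleGraph V} [DecidableRel G.Adj] {k : ℕ}
    (hreg : G.IsRegularOfDegree k) {D : Set V} (hD : IsDomSet G D)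
    (hcard : (k + 1) * D.ncard = Fintype.card V) : IsPerfectCode G D := by
  classical
  have hD' : IsDomSet G D.toFinset := by simpa using hD
  have hsum : ∑ _v : V, 1 = ∑ v, (D.toFinset.filter fun d => v = d ∨ G.Adj v d).card := by
    rw [sum_card_filter_eq_or_adj hreg, ← Set.ncard_eq_toFinset_card', hcard,
      ← Finset.card_eq_sum_ones, Finset.card_univ]
  intro v
  obtain ⟨d, hd⟩ := Finset.card_eq_one.1
    ((Finset.sum_eq_sum_iff_of_le fun v _ => hD'.one_le_card_filter v).1 hsum v
      (Finset.mem_univ v)).symm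
  refine ⟨d, ?_, fun d' hd' => ?_⟩
  · simpa using (Finset.ext_iff.1 hd d).2 (Finset.mem_singleton_self d)
  · exact Finset.mem_singleton.1 (hd ▸ by simpa using hd')

namespace IsPerfectCode

variable {G : SimpleGraph V} {D : Set V}

lemma not_adj (h : IsPerfectCode G D) {d d' : V} (hd : d ∈ D) (hd' : d' ∈ D) : ¬ G.Adj d d' :=
  fun hdd' => G.ne_of_adj hdd' ((h d).unique ⟨hd, Or.inl rfl⟩ ⟨hd', Or.inr hdd'⟩)

lemma eq_of_adj (h : IsPerfectCode G D) {v d₁ d₂ : V} (hd₁ : d₁ ∈ D) (hd₂ : d₂ ∈ D)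
    (h₁ : G.Adj v d₁) (h₂ : G.Adj v d₂) : d₁ = d₂ :=
  (h v).unique ⟨hd₁, Or.inr h₁⟩ ⟨hd₂, Or.inr h₂⟩

lemma exists_adj (h : IsPerfectCode G D) {v : V} (hv : v ∉ D) : ∃ d ∈ D, G.Adj v d := by
  obtain ⟨d, ⟨hd, rfl | hvd⟩, -⟩ := h v
  exacts [(hv hd).elim, ⟨d, hd, hvd⟩]

lemma nbhd_inter_eq_sdiff (h : IsPerfectCode G D) {A B : Set V} (hbip : G.IsBipartiteWith A B) :
    nbhd G (A ∩ D) = B \ D := by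
  ext v
  refine ⟨fun ⟨d, ⟨hdA, hdD⟩, hdv⟩ =>
    ⟨hbip.mem_of_mem_adj hdA hdv, fun hvD => h.not_adj hdD hvD hdv⟩, fun ⟨hvB, hvD⟩ => ?_⟩
  obtain ⟨d, hd, hvd⟩ := h.exists_adj hvD
  exact ⟨d, ⟨hbip.mem_of_mem_adj' hvB hvd.symm, hd⟩, hvd.symm⟩

variable [Fintype V] [DecidableRel G.Adj] {k : ℕ}

lemma ncard_nbhd_inter (h : IsPerfectCode G D) (hreg : G.IsRegularOfDegree k) (X : Set V) :
    (nbhd G (X ∩ D)).ncard = k * (X ∩ D).ncard :=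
  (ncard_nbhd_le (fun v => (hreg.degree_eq v).le) _).antisymm <|
    mul_ncard_le_ncard_nbhd (fun v => (hreg.degree_eq v).ge) fun _ _ _ hx hy =>
    h.eq_of_adj hx.2 hy.2

lemma card_filter_notMem_add_one (h : IsPerfectCode G D) (hreg : G.IsRegularOfDegree k)
    [DecidablePred (· ∈ D)] {v : V} (hv : v ∉ D) :
    ((G.neighborFinset v).filter (· ∉ D)).card + 1 = k := by
  obtain ⟨d, hd, hvd⟩ := h.exists_adj hv
  have hin : (G.neighborFinset v).filter (· ∈ D) = {d} := by
    ext w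
    simp only [Finset.mem_filter, mem_neighborFinset, Finset.mem_singleton]
    exact ⟨fun ⟨hvw, hw⟩ => h.eq_of_adj hw hd hvw hvd, fun hw => hw ▸ ⟨hvd, hd⟩⟩
  have hsplit := Finset.card_filter_add_card_filter_not (s := G.neighborFinset v) (· ∈ D)
  rw [hin, Finset.card_singleton, card_neighborFinset_eq_degree, hreg.degree_eq] at hsplit
  omega

lemma exists_bijOn_sdiff (h : IsPerfectCode G D) (hreg : G.IsRegularOfDegree k) (hk : 2 ≤ k)
    {A B : Set V} (hbip : G.IsBipartiteWith A B) :
    ∃ m : V → V, Set.BijOn m (A \ D) (B \ D) ∧ ∀ a ∈ A \ D, G.Adj a (m a) := by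
  classical
  rcases isEmpty_or_nonempty V with hV | hV
  · exact ⟨id, by simp [Set.eq_empty_of_isEmpty], fun a => isEmptyElim a⟩
  have hdeg : ∀ {X Y : Set V}, G.IsBipartiteWith X Y → ∀ x ∈ (X \ D).toFinset,
      ((Y \ D).toFinset.bipartiteAbove G.Adj x).card = k - 1 := by
    intro X Y hXY x hx
    rw [Set.mem_toFinset] at hx
    rw [← h.card_filter_notMem_add_one hreg hx.2, Nat.add_sub_cancel]
    congr 1
    ext y
    simp only [Finset.mem_bipartiteAbove, Set.mem_toFinset, Set.mem_sdiff, Finset.mem_filter,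
      mem_neighborFinset]
    exact ⟨fun ⟨⟨_, hy⟩, hxy⟩ => ⟨hxy, hy⟩,
      fun ⟨hxy, hy⟩ => ⟨⟨hXY.mem_of_mem_adj hx.1 hxy, hy⟩, hxy⟩⟩
  obtain ⟨m, hm, hmadj⟩ := Finset.exists_bijOn_of_card_bipartiteAbove_eq G.Adj (by omega)
    (s := (A \ D).toFinset) (t := (B \ D).toFinset) (hdeg hbip)
    (fun b hb => by
      rw [← hdeg hbip.symm b hb]
      congr 1
      ext a
      simp [G.adj_comm])
  exact ⟨m, by simpa using hm, fun a ha => hmadj a (Set.mem_toFinset.2 ha)⟩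

lemma isDSSDecomposable_sdiff (h : IsPerfectCode G D) (h3 : G.IsRegularOfDegree 3) {A B : Set V}
    (hbip : G.IsBipartiteWith A B) : IsDSSDecomposable G 3 (A \ D) := by
  obtain ⟨m, hm, hmadj⟩ := h.exists_bijOn_sdiff h3 (by norm_num) hbip
  have hmB : ∀ c ∈ A \ D, m c ∈ B \ D := hm.mapsTo
  have hdom : ∀ b, ∃ d, b ∉ D → d ∈ D ∧ G.Adj b d := fun b => by
    by_cases hb : b ∈ D
    · exact ⟨b, fun h => (h hb).elim⟩
    · obtain ⟨d, hd, hbd⟩ := h.exists_adj hb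
      exact ⟨d, fun _ => ⟨hd, hbd⟩⟩
  choose p hp using hdom
  have hmatched : ∀ a b, a ∈ A → b ∈ B → G.Adj a b → a ∉ A \ D →
      ∃ c ∈ A \ D, s(m c, p (m c)) = s(a, b) := by
    intro a b ha hb hab haD
    have haD : a ∈ D := by_contra fun h => haD ⟨ha, h⟩
    have hbD : b ∉ D := fun hbD => h.not_adj haD hbD hab
    obtain ⟨c, hc, rfl⟩ := hm.surjOn ⟨hb, hbD⟩
    refine ⟨c, hc, ?_⟩
    rw [h.eq_of_adj (hp _ hbD).1 haD (hp _ hbD).2 hab.symm, Sym2.eq_swap]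
  refine isDSSDecomposable_of_injOn_of_surjOn h3
    (fun c hc c' hc' => hbip.not_adj_of_mem_left hc.1 hc'.1) (m := m) (p := fun c => p (m c))
    hmadj (fun c hc => (hp _ (hmB c hc).2).2)
    (fun c hc => hbip.not_adj_of_mem_left hc.1
      (hbip.mem_of_mem_adj' (hmB c hc).1 (hp _ (hmB c hc).2).2.symm))
    (fun c hc hpc => hpc.2 (hp _ (hmB c hc).2).1) ?_ ?_
  · intro c hc c' hc' hcc'
    rcases Sym2.eq_iff.1 hcc' with ⟨hmm, -⟩ | ⟨hmp, -⟩
    · exact hm.injOn hc hc' hmm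
    · exact ((hmB c hc).2 (hmp ▸ (hp _ (hmB c' hc').2).1)).elim
  · rintro e ⟨he, hC⟩
    induction e using Sym2.ind with | h u v => ?_
    rcases hbip.mem_of_adj he with ⟨hu, hv⟩ | ⟨hu, hv⟩
    · exact hmatched u v hu hv he (hC u (Sym2.mem_mk_left u v))
    · obtain ⟨c, hc, hcvu⟩ := hmatched v u hv hu he.symm (hC v (Sym2.mem_mk_right u v))
      exact ⟨c, hc, hcvu.trans Sym2.eq_swap⟩

lemma eight_mul_ncard_sdiff (h : IsPerfectCode G D) (h3 : G.IsRegularOfDegree 3) {A B : Set V}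
    (hbip : IsBipartitionOf G A B) (hcard : 4 * D.ncard = Fintype.card V) :
    8 * (A \ D).ncard = 3 * Fintype.card V := by
  have hbw := hbip.isBipartiteWith
  have hAD := h.ncard_nbhd_inter h3 B
  rw [h.nbhd_inter_eq_sdiff hbw.symm] at hAD
  have hBD := h.ncard_nbhd_inter h3 A
  rw [h.nbhd_inter_eq_sdiff hbw] at hBD
  have hD : (A ∩ D).ncard + (B ∩ D).ncard = D.ncard := by
    rw [← Set.ncard_union_eq (hbip.2.1.mono Set.inter_subset_left Set.inter_subset_left),
      ← Set.union_inter_distrib_right, hbip.1, Set.univ_inter]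
  have := Set.ncard_inter_add_ncard_sdiff_eq_ncard A D
  have := Set.ncard_inter_add_ncard_sdiff_eq_ncard B D
  have := hbw.ncard_eq_of_isRegularOfDegree h3 (by norm_num)
  have := hbip.two_mul_ncard_left h3 (by norm_num)
  omega

end IsPerfectCode

lemma IsDSSDecomposable.eq_of_adj_of_notMem [Fintype V] {G : SimpleGraph V} [DecidableRel G.Adj]
    {r : ℕ} (hdeg : ∀ v, G.degree v ≤ 3) {A B T : Set V} (hbip : G.IsBipartiteWith A B)
    (hT : IsDSSDecomposable G r T) (hTB : T ⊆ B) {a b b' : V} (ha : a ∈ A) (hb : b ∉ T)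
    (hb' : b' ∉ T) (hab : G.Adj a b) (hab' : G.Adj a b') : b = b' := by
  obtain ⟨𝒟, h𝒟, rfl⟩ := hT
  have hpend : ∀ {b}, b ∉ {v | ∃ t ∈ 𝒟, t.center = v} → G.Adj a b →
      ∃ t ∈ 𝒟, t.mid = a ∧ t.pend = b := by
    intro b hb hab
    obtain ⟨t, ⟨ht, he⟩, -⟩ := h𝒟.2 s(a, b) hab
    have hcB : t.center ∈ B := hTB ⟨t, ht, rfl⟩
    have hmid : t.mid ∈ A := hbip.symm.mem_of_mem_adj hcB (h𝒟.1 t ht).adj_center_mid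
    have hc : t.center ∉ s(a, b) := by
      intro hc
      rcases Sym2.mem_iff.1 hc with hca | hcb
      · exact Set.disjoint_left.1 hbip.disjoint ha (hca ▸ hcB)
      · exact hb ⟨t, ht, hcb⟩
    rcases Sym2.eq_iff.1 (DoubleStarCopy.eq_mk_mid_pend_of_center_notMem he hc) with
      ⟨hma, hpb⟩ | ⟨hpa, hmb⟩
    · exact ⟨t, ht, hma.symm, hpb.symm⟩
    · exact (hbip.not_adj_of_mem_left ha (hmb ▸ hmid) hab).elim
  obtain ⟨t, ht, hta, rfl⟩ := hpend hb hab
  obtain ⟨t', ht', ht'a, rfl⟩ := hpend hb' hab'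
  rw [h𝒟.mid_injOn hdeg ht ht' (hta.trans ht'a.symm)]

lemma domNumber_le_of_isDSSDecomposable_nbhd [Fintype V] {G : SimpleGraph V} [DecidableRel G.Adj]
    (h3 : G.IsRegularOfDegree 3) {A B S : Set V} (hbip : IsBipartitionOf G A B) (hSA : S ⊆ A)
    (hS : S.ncard = 3 * (A \ S).ncard) (hT : IsDSSDecomposable G 3 (nbhd G (A \ S))) :
    domNumber G ≤ 2 * (A \ S).ncard := by
  set T := nbhd G (A \ S)
  have hbw := hbip.isBipartiteWith
  have hTB : T ⊆ B := fun _ ⟨_, ha, hav⟩ => hbw.mem_of_mem_adj ha.1 hav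
  have hNS : nbhd G (B \ T) ⊆ S := by
    rintro v ⟨b, hb, hbv⟩
    by_contra hvS
    exact hb.2 ⟨v, ⟨hbw.symm.mem_of_mem_adj hb.1 hbv, hvS⟩, hbv.symm⟩
  have hN : 3 * (B \ T).ncard ≤ (nbhd G (B \ T)).ncard :=
    mul_ncard_le_ncard_nbhd (fun v => (h3.degree_eq v).ge) fun _ _ _ hx hy hvx hvy =>
      hT.eq_of_adj_of_notMem (fun v => (h3.degree_eq v).le) hbw hTB
        (hbw.mem_of_mem_adj' hx.1 hvx) hx.2 hy.2 hvx hvy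
  have hTcard : T.ncard ≤ 3 * (A \ S).ncard := ncard_nbhd_le (fun v => (h3.degree_eq v).le) _
  have hA := Set.ncard_sdiff_add_ncard_of_subset hSA
  have hB := Set.ncard_sdiff_add_ncard_of_subset hTB
  have hAB := hbw.ncard_eq_of_isRegularOfDegree h3 (by norm_num)
  have hNS_le := Set.ncard_le_ncard hNS
  have hNS' : nbhd G (B \ T) = S := Set.eq_of_subset_of_ncard_le hNS (by omega)
  refine (domNumber_le (D := (A \ S) ∪ (B \ T)) fun v hv => ?_).trans
    ((Set.ncard_union_le _ _).trans (by omega))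
  rcases (hbip.1.symm ▸ Set.mem_univ v : v ∈ A ∪ B) with hvA | hvB
  · obtain ⟨b, hb, hbv⟩ : v ∈ nbhd G (B \ T) :=
      hNS' ▸ by_contra fun hvS => hv (Or.inl ⟨hvA, hvS⟩)
    exact ⟨b, Or.inr hb, hbv.symm⟩
  · obtain ⟨a, ha, hav⟩ : v ∈ T := by_contra fun hvT => hv (Or.inr ⟨hvB, hvT⟩)
    exact ⟨a, Or.inl ha, hav.symm⟩

theorem statement8_general {V : Type*} [Fintype V] (G : SimpleGraph V) [DecidableRel G.Adj]
    (n : ℕ) (hn : Fintype.card V = n) (hcubic : G.IsRegularOfDegree 3)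
    (A B : Set V) (hbip : IsBipartitionOf G A B) :
    4 * domNumber G = n ↔
      ∃ S ⊆ A, 8 * S.ncard = 3 * n ∧ IsDSSDecomposable G 3 S ∧
        IsDSSDecomposable G 3 (nbhd G (A \ S)) := by
  subst hn
  have hbw := hbip.isBipartiteWith
  have hγ := card_le_succ_mul_domNumber hcubic
  have hA := hbip.two_mul_ncard_left hcubic (by norm_num)
  constructor
  · intro h
    obtain ⟨D, hD, hDγ⟩ := exists_isDomSet_ncard_eq_domNumber G
    have hcode := hD.isPerfectCode hcubic (by omega)
    refine ⟨A \ D, Set.sdiff_subset, hcode.eight_mul_ncard_sdiff hcubic hbip (by omega),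
      hcode.isDSSDecomposable_sdiff hcubic hbw, ?_⟩
    rw [Set.sdiff_sdiff_right_self, hcode.nbhd_inter_eq_sdiff hbw]
    exact hcode.isDSSDecomposable_sdiff hcubic hbw.symm
  · rintro ⟨S, hSA, hS, -, hT⟩
    have := Set.ncard_sdiff_add_ncard_of_subset hSA
    have := domNumber_le_of_isDSSDecomposable_nbhd hcubic hbip hSA (by omega) hT
    omega

/-- Let `G` be a cubic bipartite graph of order `n` with bipartition
`(A, B)` and `8 ∣ n`.  Then `γ(G) = n/4` iff there is `S ⊆ A` of size `3n/8` such that `G`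
is both `(S_{1,2}, S)`-decomposable and `(S_{1,2}, N(A ∖ S))`-decomposable. -/
theorem statement8 {V : Type*} [Fintype V] (G : SimpleGraph V) [DecidableRel G.Adj]
    (n : ℕ) (hn : Fintype.card V = n) (hcubic : G.IsRegularOfDegree 3)
    (A B : Set V) (hbip : IsBipartitionOf G A B) (hdvd : 8 ∣ n) :
    4 * domNumber G = n ↔
      ∃ S ⊆ A, 8 * S.ncard = 3 * n ∧ IsDSSDecomposable G 3 S ∧
        IsDSSDecomposable G 3 (nbhd G (A \ S)) :=
  statement8_general G n hn hcubic A B hbip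
end

section
/- Let G be a cubic (3-regular) simple graph of order n with independence number α(G) = 3n/8, and let S ⊆ V(G) be an independent set with |S| = 3n/8 such that no vertex of S is contained in a cycle of length 3 or 5 in G. Let v be a vertex of G∖S having degree 1 in G∖S, with S-neighborhood N_S(v) = {x, y}. Then it is not the case that both x and y are adjacent (in G) to vertices of degree 2 in G∖S. -/
/-!
If `x` and `y` had neighbours `w₁`, `w₂` of degree 2 in `G ∖ S`, cubicity makes `x`, `y` their
only neighbours in `S`, and the excluded triangles `x v w₁`, `y v w₂` and pentagon
`x w₁ w₂ y v` make `{v, w₁, w₂}` independent. Exchanging `{x, y}` for `{v, w₁, w₂}` in `S`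
then gives an independent set of size `|S| + 1 > α(G)`.
-/

open SimpleGraph

variable {V : Type*}

section

variable {G : SimpleGraph V}

theorem inCycleOfLength_three {a b c : V} (hab : G.Adj a b) (hbc : G.Adj b c)
    (hca : G.Adj c a) : InCycleOfLength G a 3 := by
  refine ⟨.cons hab (.cons hbc (.cons hca .nil)), ?_, rfl⟩
  have hac : a ≠ c := hca.ne.symm
  simp [Walk.isCycle_def, Walk.isTrail_def, hab.ne, hbc.ne, hca.ne, hac]
  aesop

theorem inCycleOfLength_five {a b c d e : V} (hab : G.Adj a b) (hbc : G.Adj b c)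
    (hcd : G.Adj c d) (hde : G.Adj d e) (hea : G.Adj e a) (hac : a ≠ c) (had : a ≠ d)
    (hbd : b ≠ d) (hbe : b ≠ e) (hce : c ≠ e) :
    InCycleOfLength G a 5 := by
  refine ⟨.cons hab (.cons hbc (.cons hcd (.cons hde (.cons hea .nil)))), ?_, rfl⟩
  simp [Walk.isCycle_def, Walk.isTrail_def, hab.ne, hbc.ne, hcd.ne, hde.ne, hea.ne,
    hac, had, hbd, hbe, hce, hac.symm, had.symm]
  aesop

theorem ncard_neighborSet_inter_add_degIn (S : Set V) (w : V) [Fintype (G.neighborSet w)] :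
    (G.neighborSet w ∩ S).ncard + degIn G S w = G.degree w := by
  have hdiff : G.neighborSet w \ S = {u | u ∉ S ∧ G.Adj w u} := by
    ext u; simp [and_comm]
  rw [degIn, ← hdiff, Set.ncard_inter_add_ncard_sdiff_eq_ncard _ _ (Set.toFinite _),
    Set.ncard_eq_toFinset_card']
  rfl

theorem neighborSet_inter_subsingleton_of_degree_le {S : Set V} {w : V}
    [Fintype (G.neighborSet w)] (hw : G.degree w ≤ degIn G S w + 1) :
    (G.neighborSet w ∩ S).Subsingleton := by
  rw [← Set.ncard_le_one_iff_subsingleton]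
  have := ncard_neighborSet_inter_add_degIn (G := G) S w
  omega

theorem ncard_le_indepNumber [Finite V] {T : Set V} (hT : IsIndepSetIn G T) :
    T.ncard ≤ indepNumber G :=
  le_csSup ⟨Nat.card V, by rintro k ⟨T', -, rfl⟩; exact Set.ncard_le_card T'⟩
    ⟨T, hT, rfl⟩

theorem IsIndepSetIn.sdiff_union {S A B : Set V} (hS : IsIndepSetIn G S)
    (hA : IsIndepSetIn G A) (hAB : ∀ a ∈ A, ∀ s ∈ S, G.Adj a s → s ∈ B) :
    IsIndepSetIn G (S \ B ∪ A) := by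
  rintro u (⟨huS, huB⟩ | huA) u' (⟨hu'S, hu'B⟩ | hu'A) hadj
  · exact hS huS hu'S hadj
  · exact huB (hAB u' hu'A u huS hadj.symm)
  · exact hu'B (hAB u huA u' hu'S hadj)
  · exact hA huA hu'A hadj

theorem isIndepSetIn_triple {a b c : V} (hab : ¬ G.Adj a b) (hac : ¬ G.Adj a c)
    (hbc : ¬ G.Adj b c) : IsIndepSetIn G {a, b, c} := by
  simp only [IsIndepSetIn, Set.mem_insert_iff, Set.mem_singleton_iff]
  rintro u (rfl | rfl | rfl) u' (rfl | rfl | rfl) h <;>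
    first
      | exact h.ne rfl | contradiction
      | exact hab h.symm | exact hac h.symm | exact hbc h.symm

theorem IsIndepSetIn.ncard_le_of_exchange [Finite V] {S A B : Set V}
    (hS : IsIndepSetIn G S) (hmax : indepNumber G ≤ S.ncard) (hA : IsIndepSetIn G A)
    (hAS : Disjoint A S) (hAB : ∀ a ∈ A, ∀ s ∈ S, G.Adj a s → s ∈ B) :
    A.ncard ≤ B.ncard := by
  have hswap := ncard_le_indepNumber (hS.sdiff_union hA hAB)
  rw [Set.ncard_union_eq (hAS.symm.mono_left Set.sdiff_subset)] at hswap
  have := Set.ncard_le_ncard_sdiff_add_ncard S B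
  omega

end

theorem statement16_general {V : Type*} [Fintype V] (G : SimpleGraph V) [DecidableRel G.Adj]
    (n : ℕ) (hcubic : G.IsRegularOfDegree 3)
    (halpha : 8 * indepNumber G = 3 * n)
    (S : Set V) (hind : IsIndepSetIn G S) (hcard : 8 * S.ncard = 3 * n)
    (hcycfree : ∀ s ∈ S, ¬ InCycleOfLength G s 3 ∧ ¬ InCycleOfLength G s 5)
    (v : V) (hv : v ∉ S) (hdeg : degIn G S v = 1)
    (x y : V) (hxy : x ≠ y) (hN : G.neighborSet v ∩ S = {x, y}) :
    ¬ ((∃ w ∉ S, degIn G S w = 2 ∧ G.Adj x w) ∧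
        (∃ w ∉ S, degIn G S w = 2 ∧ G.Adj y w)) := by
  rintro ⟨⟨w₁, hw₁S, hw₁deg, hxw₁⟩, w₂, hw₂S, hw₂deg, hyw₂⟩
  obtain ⟨hvx, hxS⟩ : x ∈ G.neighborSet v ∩ S := hN ▸ Set.mem_insert x {y}
  obtain ⟨hvy, hyS⟩ : y ∈ G.neighborSet v ∩ S := hN ▸ Set.mem_insert_of_mem x rfl
  have hw₁x : ∀ s ∈ S, G.Adj w₁ s → s = x := fun s hs h =>
    neighborSet_inter_subsingleton_of_degree_le (by rw [hcubic w₁, hw₁deg]) ⟨h, hs⟩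
      ⟨hxw₁.symm, hxS⟩
  have hw₂y : ∀ s ∈ S, G.Adj w₂ s → s = y := fun s hs h =>
    neighborSet_inter_subsingleton_of_degree_le (by rw [hcubic w₂, hw₂deg]) ⟨h, hs⟩
      ⟨hyw₂.symm, hyS⟩
  have hvw₁ : v ≠ w₁ := by rintro rfl; omega
  have hvw₂ : v ≠ w₂ := by rintro rfl; omega
  have hw₁w₂ : w₁ ≠ w₂ := by rintro rfl; exact hxy (hw₁x y hyS hyw₂.symm).symm
  have hnvw₁ : ¬ G.Adj v w₁ := fun h =>
    (hcycfree x hxS).1 (inCycleOfLength_three hvx.symm h hxw₁.symm)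
  have hnvw₂ : ¬ G.Adj v w₂ := fun h =>
    (hcycfree y hyS).1 (inCycleOfLength_three hvy.symm h hyw₂.symm)
  have hnw₁w₂ : ¬ G.Adj w₁ w₂ := fun h =>
    (hcycfree x hxS).2 (inCycleOfLength_five hxw₁ h hyw₂.symm hvy.symm hvx
      (fun h => hw₂S (h ▸ hxS)) hxy (fun h => hw₁S (h ▸ hyS)) hvw₁.symm hvw₂.symm)
  have hswap := hind.ncard_le_of_exchange (A := {v, w₁, w₂}) (B := {x, y}) (by omega)
    (isIndepSetIn_triple hnvw₁ hnvw₂ hnw₁w₂) (by simp [hv, hw₁S, hw₂S]) (by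
      rintro a (rfl | rfl | rfl) s hs h
      · exact hN ▸ ⟨h, hs⟩
      · exact .inl (hw₁x s hs h)
      · exact .inr (hw₂y s hs h))
  rw [Set.ncard_eq_three.2 ⟨v, w₁, w₂, hvw₁, hvw₂, hw₁w₂, rfl⟩, Set.ncard_pair hxy]
    at hswap
  omega

/-- Let `G` be a cubic graph of order `n` with `α(G) = 3n/8` and let `S`
be an independent set of size `3n/8` no vertex of which lies on a cycle of length 3 or 5.
If `v` has degree 1 in `G ∖ S` and `N_S(v) = {x, y}`, then `x` and `y` are not both
adjacent to vertices of degree 2 in `G ∖ S`. -/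
theorem statement16 {V : Type*} [Fintype V] (G : SimpleGraph V) [DecidableRel G.Adj]
    (n : ℕ) (hn : Fintype.card V = n) (hcubic : G.IsRegularOfDegree 3)
    (halpha : 8 * indepNumber G = 3 * n)
    (S : Set V) (hind : IsIndepSetIn G S) (hcard : 8 * S.ncard = 3 * n)
    (hcycfree : ∀ s ∈ S, ¬ InCycleOfLength G s 3 ∧ ¬ InCycleOfLength G s 5)
    (v : V) (hv : v ∉ S) (hdeg : degIn G S v = 1)
    (x y : V) (hxy : x ≠ y) (hN : G.neighborSet v ∩ S = {x, y}) :
    ¬ ((∃ w ∉ S, degIn G S w = 2 ∧ G.Adj x w) ∧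
        (∃ w ∉ S, degIn G S w = 2 ∧ G.Adj y w)) :=
  statement16_general G n hcubic halpha S hind hcard hcycfree v hv hdeg x y hxy hN
end
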